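/- arXiv:2303.01133 — 9 statements merged into one kernel-verified Lean document; each statement's English description precedes it below -/
import Mathlib

section
/- Let G₁ and G₂ be groups. The direct product G₁ × G₂ is acceptable if and only if both G₁ and G₂ are acceptable. -/
/-- A group `G` is *acceptable* if for every finite group `H`, any two element-conjugate
homomorphisms `H → G` are globally conjugate. -/
def IsAcceptable (G : Type*) [Group G] : Prop :=
  ∀ (H : Type) (_ : Group H) (_ : Finite H) (φ₁ φ₂ : H →* G),
    (∀ h : H, ∃ g : G, g * φ₁ h * g⁻¹ = φ₂ h) →
    ∃ g : G, ∀ h : H, g * φ₁ h * g⁻¹ = φ₂ h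

theorem product_acceptable_iff (G₁ G₂ : Type*) [Group G₁] [Group G₂] :
    IsAcceptable (G₁ × G₂) ↔ IsAcceptable G₁ ∧ IsAcceptable G₂ := by
  constructor
  · intro hG
    constructor
    · intro H _ _ φ₁ φ₂ hc
      obtain ⟨g, hg⟩ := hG H ‹_› ‹_› ((MonoidHom.inl G₁ G₂).comp φ₁)
        ((MonoidHom.inl G₁ G₂).comp φ₂) (fun h => by
          obtain ⟨a, ha⟩ := hc h
          exact ⟨(a, 1), by simp [Prod.ext_iff, ha]⟩)
      refine ⟨g.1, fun h => ?_⟩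
      have := congrArg Prod.fst (hg h)
      simpa using this
    · intro H _ _ φ₁ φ₂ hc
      obtain ⟨g, hg⟩ := hG H ‹_› ‹_› ((MonoidHom.inr G₁ G₂).comp φ₁)
        ((MonoidHom.inr G₁ G₂).comp φ₂) (fun h => by
          obtain ⟨a, ha⟩ := hc h
          exact ⟨(1, a), by simp [Prod.ext_iff, ha]⟩)
      refine ⟨g.2, fun h => ?_⟩
      have := congrArg Prod.snd (hg h)
      simpa using this
  · rintro ⟨h1, h2⟩ H _ _ φ₁ φ₂ hc
    obtain ⟨g₁, hg₁⟩ := h1 H ‹_› ‹_› ((MonoidHom.fst G₁ G₂).comp φ₁)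
      ((MonoidHom.fst G₁ G₂).comp φ₂) (fun h => by
        obtain ⟨a, ha⟩ := hc h
        exact ⟨a.1, by simpa using congrArg Prod.fst ha⟩)
    obtain ⟨g₂, hg₂⟩ := h2 H ‹_› ‹_› ((MonoidHom.snd G₁ G₂).comp φ₁)
      ((MonoidHom.snd G₁ G₂).comp φ₂) (fun h => by
        obtain ⟨a, ha⟩ := hc h
        exact ⟨a.2, by simpa using congrArg Prod.snd ha⟩)
    exact ⟨(g₁, g₂), fun h => Prod.ext (hg₁ h) (hg₂ h)⟩
end

section
/- If G is a strongly acceptable group (element-conjugate homomorphisms from any group are globally conjugate) and A is an abelian subgroup of G, then the centralizer C_G(A) is strongly acceptable. -/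
/-- A group `G` is *strongly acceptable* if for every group `H`, any two element-conjugate
homomorphisms `H → G` are globally conjugate. -/
def IsStronglyAcceptable (G : Type*) [Group G] : Prop :=
  ∀ (H : Type) (_ : Group H) (φ₁ φ₂ : H →* G),
    (∀ h : H, ∃ g : G, g * φ₁ h * g⁻¹ = φ₂ h) →
    ∃ g : G, ∀ h : H, g * φ₁ h * g⁻¹ = φ₂ h

/-- Auxiliary: extend a homomorphism `H →* C_G(A)` to `H × A →* G`. -/
def extHom {G : Type} [Group G] (A : Subgroup G) {H : Type} [Group H]
    (φ : H →* Subgroup.centralizer (A : Set G)) : (H × A) →* G where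
  toFun p := ((φ p.1 : G) * (p.2 : G))
  map_one' := by simp
  map_mul' := by
    rintro ⟨h₁, a₁⟩ ⟨h₂, a₂⟩
    have hcomm : (a₁ : G) * (φ h₂ : G) = (φ h₂ : G) * (a₁ : G) := (φ h₂).2 a₁ a₁.2
    simp only [Prod.fst_mul, Prod.snd_mul, map_mul, Subgroup.coe_mul]
    rw [mul_assoc, mul_assoc, ← mul_assoc ((φ h₂ : G)) (a₁ : G), ← hcomm, mul_assoc]

theorem centralizer_of_abelian_strongly_acceptable (G : Type) [Group G]
    (hG : IsStronglyAcceptable G) (A : Subgroup G) (hA : ∀ x y : A, x * y = y * x) :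
    IsStronglyAcceptable (Subgroup.centralizer (A : Set G)) := by
  intro H _ φ₁ φ₂ hconj
  have key : ∀ p : H × A, ∃ c : G,
      c * (extHom A φ₁) p * c⁻¹ = (extHom A φ₂) p := by
    rintro ⟨h, a⟩
    obtain ⟨c, hc⟩ := hconj h
    refine ⟨c, ?_⟩
    simp only [extHom, MonoidHom.coe_mk, OneHom.coe_mk]
    have hca : (c : G) * (a : G) * (c : G)⁻¹ = a := by
      rw [← c.2 a a.2, mul_assoc, mul_inv_cancel, mul_one]
    calc (c : G) * ((φ₁ h : G) * a) * (c : G)⁻¹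
        = ((c : G) * (φ₁ h : G) * (c : G)⁻¹) * ((c : G) * (a : G) * (c : G)⁻¹) := by
          group
      _ = (φ₂ h : G) * a := by
          rw [hca]
          congr 1
          exact congrArg (Subtype.val) hc
  obtain ⟨g, hg⟩ := hG (H × A) inferInstance (extHom A φ₁) (extHom A φ₂) key
  have hgA : g ∈ Subgroup.centralizer (A : Set G) := by
    rw [Subgroup.mem_centralizer_iff]
    intro a ha
    have h1 := hg (1, ⟨a, ha⟩)
    simp only [extHom, MonoidHom.coe_mk, OneHom.coe_mk, map_one,
      Subgroup.coe_one, one_mul] at h1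
    have h2 : g * a = a * g := by
      have := congrArg (· * g) h1
      simpa [mul_assoc] using this
    exact h2.symm
  refine ⟨⟨g, hgA⟩, fun h => ?_⟩
  have h1 := hg (h, 1)
  simp only [extHom, MonoidHom.coe_mk, OneHom.coe_mk, Subgroup.coe_one, mul_one] at h1
  ext
  simpa using h1
end

section
/- Let F be a field of characteristic p > 0 with at least 5 elements, or more generally any field of characteristic p > 0 admitting nonzero a ≠ b with a² ≠ b², and fix such nonzero a, b ∈ F with a ≠ b and a² ≠ b². With φ₁, φ₂ : (ℤ/pℤ)² → GL(2, F) defined by φ₁((1,0)) = [[1,a],[0,1]], φ₁((0,1)) = [[1,b],[0,1]], φ₂((1,0)) = [[1,b],[0,1]], φ₂((0,1)) = [[1,a],[0,1]], there exists no g ∈ GL(2, F) such that g·φ₁(h)·g⁻¹ = φ₂(h) for all h ∈ (ℤ/pℤ)². In particular GL(2, F) is not acceptable. -/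
open Matrix

section Aux

variable {F : Type} [Field F]

/-- The upper unitriangular matrix `!![1, t; 0, 1]` as a unit. -/
def uu (t : F) : GL (Fin 2) F :=
  ⟨!![1, t; 0, 1], !![1, -t; 0, 1],
    by ext i j; fin_cases i <;> fin_cases j <;>
      simp [Matrix.mul_apply, Fin.sum_univ_two, Matrix.one_apply],
    by ext i j; fin_cases i <;> fin_cases j <;>
      simp [Matrix.mul_apply, Fin.sum_univ_two, Matrix.one_apply]⟩

@[simp] lemma uu_val (t : F) :
    ((uu t : GL (Fin 2) F) : Matrix (Fin 2) (Fin 2) F) = !![1, t; 0, 1] := rfl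

lemma uu_mul (s t : F) : (uu s) * (uu t) = (uu (s + t) : GL (Fin 2) F) := by
  ext i j
  rw [Units.val_mul, uu_val, uu_val, uu_val]
  fin_cases i <;> fin_cases j <;>
    simp [Matrix.mul_apply, Fin.sum_univ_two] <;> try ring

lemma uu_zero : (uu (0 : F)) = 1 := by
  ext i j
  rw [uu_val]
  fin_cases i <;> fin_cases j <;> simp [Matrix.one_apply]

/-- Conjugating a nontrivial unipotent to another nontrivial unipotent. -/
lemma uu_conj (s t : F) (hs : s ≠ 0) (ht : t ≠ 0) :
    ∃ g : GL (Fin 2) F, g * uu s * g⁻¹ = uu t := by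
  refine ⟨⟨!![t * s⁻¹, 0; 0, 1], !![s * t⁻¹, 0; 0, 1], ?_, ?_⟩, ?_⟩
  · ext i j; fin_cases i <;> fin_cases j <;>
      simp [Matrix.mul_apply, Fin.sum_univ_two, Matrix.one_apply] <;> field_simp
  · ext i j; fin_cases i <;> fin_cases j <;>
      simp [Matrix.mul_apply, Fin.sum_univ_two, Matrix.one_apply] <;> field_simp
  · rw [mul_inv_eq_iff_eq_mul]
    ext i j
    rw [Units.val_mul, Units.val_mul, uu_val, uu_val]
    show ((!![t * s⁻¹, 0; 0, 1] : Matrix (Fin 2) (Fin 2) F) * !![1, s; 0, 1]) i j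
      = (!![1, t; 0, 1] * (!![t * s⁻¹, 0; 0, 1] : Matrix (Fin 2) (Fin 2) F)) i j
    fin_cases i <;> fin_cases j <;>
      simp [Matrix.mul_apply, Fin.sum_univ_two] <;> field_simp

/-- The diagonal involution `diag (-1, 1)`. -/
def emat : GL (Fin 2) F :=
  ⟨!![-1, 0; 0, 1], !![-1, 0; 0, 1],
    by ext i j; fin_cases i <;> fin_cases j <;>
      simp [Matrix.mul_apply, Fin.sum_univ_two, Matrix.one_apply],
    by ext i j; fin_cases i <;> fin_cases j <;>
      simp [Matrix.mul_apply, Fin.sum_univ_two, Matrix.one_apply]⟩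

/-- The diagonal involution `diag (1, -1)`. -/
def epat : GL (Fin 2) F :=
  ⟨!![1, 0; 0, -1], !![1, 0; 0, -1],
    by ext i j; fin_cases i <;> fin_cases j <;>
      simp [Matrix.mul_apply, Fin.sum_univ_two, Matrix.one_apply],
    by ext i j; fin_cases i <;> fin_cases j <;>
      simp [Matrix.mul_apply, Fin.sum_univ_two, Matrix.one_apply]⟩

@[simp] lemma emat_val :
    ((emat : GL (Fin 2) F) : Matrix (Fin 2) (Fin 2) F) = !![-1, 0; 0, 1] := rfl

@[simp] lemma epat_val :
    ((epat : GL (Fin 2) F) : Matrix (Fin 2) (Fin 2) F) = !![1, 0; 0, -1] := rfl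

lemma emat_sq : (emat : GL (Fin 2) F) * emat = 1 := by
  ext i j
  rw [Units.val_mul, emat_val]
  fin_cases i <;> fin_cases j <;>
    simp [Matrix.mul_apply, Fin.sum_univ_two, Matrix.one_apply]

lemma epat_sq : (epat : GL (Fin 2) F) * epat = 1 := by
  ext i j
  rw [Units.val_mul, epat_val]
  fin_cases i <;> fin_cases j <;>
    simp [Matrix.mul_apply, Fin.sum_univ_two, Matrix.one_apply]

lemma emat_conj (t : F) : emat * uu t = uu (-t) * emat := by
  ext i j
  rw [Units.val_mul, Units.val_mul, emat_val, uu_val, uu_val]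
  fin_cases i <;> fin_cases j <;>
    simp [Matrix.mul_apply, Fin.sum_univ_two]

lemma epat_conj (t : F) : epat * uu t = uu (-t) * epat := by
  ext i j
  rw [Units.val_mul, Units.val_mul, epat_val, uu_val, uu_val]
  fin_cases i <;> fin_cases j <;>
    simp [Matrix.mul_apply, Fin.sum_univ_two]

lemma sr_conj_mat (x : F) :
    (!![-2 * x, -(x ^ 2 + 1); 4, 2 * x] : Matrix (Fin 2) (Fin 2) F)
        * (!![-1, 0; 0, 1] * !![1, x; 0, 1])
      = (!![1, 0; 0, -1] * !![1, x; 0, 1])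
        * (!![-2 * x, -(x ^ 2 + 1); 4, 2 * x] : Matrix (Fin 2) (Fin 2) F) := by
  ext i j
  fin_cases i <;> fin_cases j <;>
    simp [Matrix.mul_apply, Fin.sum_univ_two] <;> ring

/-- The "reflection" matrices `emat * uu x` and `epat * uu x` are conjugate when `2 ≠ 0`. -/
lemma sr_conj (x : F) (h2 : (2 : F) ≠ 0) :
    ∃ g : GL (Fin 2) F, g * (emat * uu x) * g⁻¹ = epat * uu x := by
  have h4 : (4 : F) ≠ 0 := by
    intro h
    apply h2
    have h' : (2 : F) * 2 = 0 := by rw [show (2 : F) * 2 = 4 by norm_num, h]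
    rcases mul_eq_zero.1 h' with h'' | h'' <;> exact h''
  refine ⟨⟨!![-2 * x, -(x ^ 2 + 1); 4, 2 * x],
      !![4⁻¹ * (2 * x), 4⁻¹ * (x ^ 2 + 1); 4⁻¹ * (-4), 4⁻¹ * (-2 * x)], ?_, ?_⟩, ?_⟩
  · ext i j; fin_cases i <;> fin_cases j <;>
      simp [Matrix.mul_apply, Fin.sum_univ_two, Matrix.one_apply] <;> field_simp <;> ring
  · ext i j; fin_cases i <;> fin_cases j <;>
      simp [Matrix.mul_apply, Fin.sum_univ_two, Matrix.one_apply] <;> field_simp <;> ring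
  · rw [mul_inv_eq_iff_eq_mul]
    apply Units.ext
    rw [Units.val_mul, Units.val_mul, Units.val_mul, Units.val_mul,
      emat_val, epat_val, uu_val]
    exact sr_conj_mat x

/-- Key computation: no invertible matrix conjugates `uu a` to `uu b` and `uu b` to `uu a`
unless `a ^ 2 = b ^ 2`. -/
lemma key {a b : F} (hb : b ≠ 0) (hsq : a ^ 2 ≠ b ^ 2)
    (G : Matrix (Fin 2) (Fin 2) F) (hdet : G.det ≠ 0)
    (h1 : G * !![1, a; 0, 1] = !![1, b; 0, 1] * G)
    (h2 : G * !![1, b; 0, 1] = !![1, a; 0, 1] * G) : False := by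
  have e1 := fun i j => congrFun (congrFun h1 i) j
  have e2 := fun i j => congrFun (congrFun h2 i) j
  have e100 := e1 0 0
  have e101 := e1 0 1
  have e201 := e2 0 1
  simp [Matrix.mul_apply, Fin.sum_univ_two] at e100 e101 e201
  have h10 : G 1 0 = 0 := e100.resolve_left hb
  rw [Matrix.det_fin_two, h10, mul_zero, sub_zero] at hdet
  have hG00 : G 0 0 ≠ 0 := left_ne_zero_of_mul hdet
  exact hsq (mul_left_cancel₀ hG00 (by linear_combination a * e101 - b * e201))

lemma unit_conj_mat {g h k : GL (Fin 2) F} (H : g * h * g⁻¹ = k) :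
    (g : Matrix (Fin 2) (Fin 2) F) * h = (k : Matrix (Fin 2) (Fin 2) F) * g := by
  have h' := congrArg Units.val (mul_inv_eq_iff_eq_mul.mp H)
  push_cast at h'
  exact h'

lemma gl_det_ne_zero (g : GL (Fin 2) F) : ((g : Matrix (Fin 2) (Fin 2) F)).det ≠ 0 :=
  ((Matrix.isUnit_iff_isUnit_det _).mp g.isUnit).ne_zero

lemma zmod2_cases : ∀ z : ZMod 2, z = 0 ∨ z = 1 := by decide

variable (p : ℕ) [Fact p.Prime] [CharP F p]

def dihFun (E : GL (Fin 2) F) : DihedralGroup p → GL (Fin 2) F := fun h =>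
  match h with
  | .r i => uu (ZMod.castHom (dvd_refl p) F i)
  | .sr i => E * uu (ZMod.castHom (dvd_refl p) F i)

@[simp] lemma dihFun_r (E : GL (Fin 2) F) (i : ZMod p) :
    dihFun p E (.r i) = uu (ZMod.castHom (dvd_refl p) F i) := rfl

@[simp] lemma dihFun_sr (E : GL (Fin 2) F) (i : ZMod p) :
    dihFun p E (.sr i) = E * uu (ZMod.castHom (dvd_refl p) F i) := rfl

/-- The dihedral representation determined by an involution `E` inverting unipotents. -/
def dih (E : GL (Fin 2) F) (hE : E * E = 1)
    (hc : ∀ t : F, E * uu t = uu (-t) * E) : DihedralGroup p →* GL (Fin 2) F :=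
  MonoidHom.mk' (dihFun p E)
  (by
    have hc' : ∀ t : F, uu t * E = E * uu (-t) := by
      intro t
      have h' := hc (-t)
      rw [neg_neg] at h'
      rw [h']
    rintro (i | i) (j | j)
    · rw [DihedralGroup.r_mul_r]
      simp only [dihFun_r]
      rw [uu_mul, ← map_add]
    · rw [DihedralGroup.r_mul_sr]
      simp only [dihFun_r, dihFun_sr]
      rw [← mul_assoc, hc', mul_assoc, uu_mul, map_sub, neg_add_eq_sub]
    · rw [DihedralGroup.sr_mul_r]
      simp only [dihFun_r, dihFun_sr]
      rw [mul_assoc, uu_mul, ← map_add]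
    · rw [DihedralGroup.sr_mul_sr]
      simp only [dihFun_r, dihFun_sr]
      rw [mul_assoc, ← mul_assoc (uu _), hc', ← mul_assoc, ← mul_assoc, hE,
        one_mul, uu_mul, map_sub, neg_add_eq_sub])

lemma dih_r (E : GL (Fin 2) F) (hE : E * E = 1)
    (hc : ∀ t : F, E * uu t = uu (-t) * E) (i : ZMod p) :
    dih p E hE hc (.r i) = uu (ZMod.castHom (dvd_refl p) F i) := rfl

lemma dih_sr (E : GL (Fin 2) F) (hE : E * E = 1)
    (hc : ∀ t : F, E * uu t = uu (-t) * E) (i : ZMod p) :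
    dih p E hE hc (.sr i) = E * uu (ZMod.castHom (dvd_refl p) F i) := rfl

/-- The homomorphism `(x, y) ↦ uu (a x + b y)` on `Multiplicative ((ZMod p)²)`. -/
def phiM (a b : F) : Multiplicative (ZMod p × ZMod p) →* GL (Fin 2) F :=
  MonoidHom.mk' (fun h => uu (a * ZMod.castHom (dvd_refl p) F h.toAdd.1
      + b * ZMod.castHom (dvd_refl p) F h.toAdd.2))
  (by
    intro h₁ h₂
    simp only [toAdd_mul, Prod.fst_add, Prod.snd_add, map_add]
    rw [uu_mul]
    ring_nf)

lemma phiM_apply (a b : F) (h : Multiplicative (ZMod p × ZMod p)) :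
    phiM p a b h = uu (a * ZMod.castHom (dvd_refl p) F h.toAdd.1
      + b * ZMod.castHom (dvd_refl p) F h.toAdd.2) := rfl

end Aux

theorem GL2_not_acceptable (F : Type) [Field F] (p : ℕ) [Fact p.Prime] [CharP F p]
    (a b : F) (ha : a ≠ 0) (hb : b ≠ 0) (hab : a ≠ b) (hsq : a ^ 2 ≠ b ^ 2) :
    (∀ φ₁ φ₂ : (ZMod p × ZMod p) →* GL (Fin 2) F,
      ((φ₁ (1, 0) : GL (Fin 2) F) : Matrix (Fin 2) (Fin 2) F) = !![1, a; 0, 1] →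
      ((φ₁ (0, 1) : GL (Fin 2) F) : Matrix (Fin 2) (Fin 2) F) = !![1, b; 0, 1] →
      ((φ₂ (1, 0) : GL (Fin 2) F) : Matrix (Fin 2) (Fin 2) F) = !![1, b; 0, 1] →
      ((φ₂ (0, 1) : GL (Fin 2) F) : Matrix (Fin 2) (Fin 2) F) = !![1, a; 0, 1] →
      ¬ ∃ g : GL (Fin 2) F, ∀ h : ZMod p × ZMod p, g * φ₁ h * g⁻¹ = φ₂ h) ∧
    ¬ IsAcceptable (GL (Fin 2) F) := by
  constructor
  · intro φ₁ φ₂ h1 h2 h3 h4 ⟨g, hg⟩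
    have m1 := unit_conj_mat (hg (1, 0))
    have m2 := unit_conj_mat (hg (0, 1))
    rw [h1, h3] at m1
    rw [h2, h4] at m2
    exact key hb hsq _ (gl_det_ne_zero g) m1 m2
  · intro hacc
    rcases eq_or_ne p 2 with hp | hp
    · -- characteristic 2 : use `Multiplicative ((ZMod 2)²)`
      subst hp
      have hpw : ∀ h : Multiplicative (ZMod 2 × ZMod 2),
          ∃ g : GL (Fin 2) F, g * phiM 2 a b h * g⁻¹ = phiM 2 b a h := by
        intro h
        rw [phiM_apply, phiM_apply]
        rcases zmod2_cases h.toAdd.1 with hx | hx <;> rcases zmod2_cases h.toAdd.2 with hy | hy <;>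
          rw [hx, hy] <;>
          simp only [map_zero, _root_.map_one, mul_zero, mul_one, add_zero, zero_add]
        · exact ⟨1, by simp⟩
        · exact uu_conj b a hb ha
        · exact uu_conj a b ha hb
        · exact ⟨1, by rw [add_comm a b]; simp⟩
      obtain ⟨g, hg⟩ := hacc (Multiplicative (ZMod 2 × ZMod 2)) inferInstance inferInstance
        (phiM 2 a b) (phiM 2 b a) hpw
      have m1 := unit_conj_mat (hg (Multiplicative.ofAdd (1, 0)))
      have m2 := unit_conj_mat (hg (Multiplicative.ofAdd (0, 1)))
      rw [phiM_apply, phiM_apply] at m1 m2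
      simp only [toAdd_ofAdd, map_zero, _root_.map_one, mul_zero, mul_one, add_zero, zero_add,
        uu_val] at m1 m2
      exact key hb hsq _ (gl_det_ne_zero g) m1 m2
    · -- odd characteristic : use the dihedral group
      have h2 : (2 : F) ≠ 0 := by
        have hnd : ¬ p ∣ 2 := by
          intro hd
          exact hp ((Nat.prime_dvd_prime_iff_eq Fact.out Nat.prime_two).mp hd)
        intro h
        exact hnd ((CharP.cast_eq_zero_iff F p 2).mp (by exact_mod_cast h))
      have hpw : ∀ h : DihedralGroup p,
          ∃ g : GL (Fin 2) F, g * dih p emat emat_sq emat_conj h * g⁻¹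
            = dih p epat epat_sq epat_conj h := by
        rintro (i | i)
        · exact ⟨1, by rw [dih_r, dih_r]; simp⟩
        · rw [dih_sr, dih_sr]
          exact sr_conj _ h2
      obtain ⟨g, hg⟩ := hacc (DihedralGroup p) inferInstance inferInstance
        (dih p emat emat_sq emat_conj) (dih p epat epat_sq epat_conj) hpw
      have m1 := unit_conj_mat (hg (.r 1))
      have m2 := unit_conj_mat (hg (.sr 0))
      rw [dih_r, dih_r, _root_.map_one] at m1
      rw [dih_sr, dih_sr, map_zero, uu_zero, mul_one, mul_one] at m2
      rw [uu_val] at m1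
      rw [emat_val, epat_val] at m2
      set G : Matrix (Fin 2) (Fin 2) F := (g : Matrix (Fin 2) (Fin 2) F) with hG
      have e1 := congrFun (congrFun m1 0) 0
      have e2 := congrFun (congrFun m2 0) 0
      simp [Matrix.mul_apply, Fin.sum_univ_two] at e1 e2
      have h10 : G 1 0 = 0 := by linear_combination e1
      have h00 : G 0 0 = 0 := by
        have h2G : (2 : F) * G 0 0 = 0 := by linear_combination -e2
        rcases mul_eq_zero.1 h2G with h | h
        · exact absurd h h2
        · exact h
      have hd := gl_det_ne_zero g
      rw [← hG, Matrix.det_fin_two, h10, h00, mul_zero, zero_mul, sub_zero] at hd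
      exact hd rfl
end

section
/- Let F be a field. If GL(n+1, F) is acceptable and char F ≠ 2, then GL(n, F) is acceptable. -/
theorem IsAcceptable.of_mulEquiv {G G' : Type*} [Group G] [Group G'] (e : G ≃* G')
    (hG : IsAcceptable G) : IsAcceptable G' := by
  intro H _ _ φ₁ φ₂ hconj
  obtain ⟨g, hg⟩ := hG H ‹_› ‹_› (e.symm.toMonoidHom.comp φ₁) (e.symm.toMonoidHom.comp φ₂)
    fun h => by
      obtain ⟨g, hg⟩ := hconj h
      exact ⟨e.symm g, by simp [← hg]⟩
  exact ⟨e g, fun h => e.symm.injective (by simpa using hg h)⟩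

open Subgroup in
theorem IsAcceptable.of_retract_centralizer {G K : Type*} {Q : Type} [Group G] [Group K] [Group Q]
    [Finite Q] (hG : IsAcceptable G) (χ : Q →* G) (ι : K →* centralizer (Set.range χ))
    (π : centralizer (Set.range χ) →* K) (hπ : π.comp ι = MonoidHom.id K) :
    IsAcceptable K := by
  intro H _ _ φ₁ φ₂ hconj
  have comm (k : K) (q : Q) : Commute (ι k : G) (χ q) :=
    ((mem_centralizer_iff.mp (ι k).2) _ ⟨q, rfl⟩).symm
  let ψ (φ : H →* K) : H × Q →* G :=
    ((centralizer (Set.range χ)).subtype.comp (ι.comp φ)).noncommCoprod χ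
      fun h q => comm (φ h) q
  have ψ_apply (φ : H →* K) (h : H) (q : Q) : ψ φ (h, q) = ι (φ h) * χ q := rfl
  obtain ⟨g, hg⟩ := hG (H × Q) inferInstance inferInstance (ψ φ₁) (ψ φ₂) fun ⟨h, q⟩ => by
    obtain ⟨c, hc⟩ := hconj h
    refine ⟨ι c, ?_⟩
    rw [ψ_apply, ψ_apply, ← hc]
    simp only [map_mul, map_inv, coe_mul, coe_inv, mul_assoc, (comm c q).inv_left.symm.eq]
  have hgχ : g ∈ centralizer (Set.range χ) := mem_centralizer_iff.mpr fun _ ⟨q, hq⟩ => by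
    have hq' := hg (1, q)
    simp only [ψ_apply, map_one, OneMemClass.coe_one, one_mul, hq] at hq'
    rwa [mul_inv_eq_iff_eq_mul, eq_comm] at hq'
  refine ⟨π ⟨g, hgχ⟩, fun h => ?_⟩
  have hι : ⟨g, hgχ⟩ * ι (φ₁ h) * ⟨g, hgχ⟩⁻¹ = ι (φ₂ h) :=
    Subtype.ext (by simpa [ψ_apply] using hg (h, 1))
  have hπι (k : K) : π (ι k) = k := DFunLike.congr_fun hπ k
  simpa [hπι] using congrArg π hι

theorem eq_zero_of_neg_eq_self {R : Type*} [Ring R] [NoZeroDivisors R] (h2 : (2 : R) ≠ 0)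
    {x : R} (h : -x = x) : x = 0 := by
  have : 2 * x = 0 := by rw [two_mul]; nth_rewrite 1 [← h]; exact neg_add_cancel x
  exact (mul_eq_zero.mp this).resolve_left h2

namespace Matrix

variable {m o R : Type*} [Ring R]

theorem IsTwoBlockDiagonal.toBlocks₁₁_mul {l n p q : Type*} [Fintype n] [Fintype p]
    {A : Matrix (l ⊕ m) (n ⊕ p) R} (hA : A.IsTwoBlockDiagonal) (B : Matrix (n ⊕ p) (o ⊕ q) R) :
    (A * B).toBlocks₁₁ = A.toBlocks₁₁ * B.toBlocks₁₁ := by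
  rw [← fromBlocks_toBlocks A, ← fromBlocks_toBlocks B, fromBlocks_multiply, hA.1]
  simp

variable [Fintype m] [Fintype o] [DecidableEq m] [DecidableEq o]

theorem isTwoBlockDiagonal_of_commute_fromBlocks_one_neg_one [NoZeroDivisors R]
    (h2 : (2 : R) ≠ 0) {A : Matrix (m ⊕ o) (m ⊕ o) R}
    (hA : Commute A (fromBlocks 1 0 0 (-1))) : A.IsTwoBlockDiagonal := by
  rw [← fromBlocks_toBlocks A, Commute, SemiconjBy, fromBlocks_multiply, fromBlocks_multiply,
    fromBlocks_inj] at hA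
  simp only [Matrix.mul_zero, Matrix.zero_mul, Matrix.mul_one, Matrix.one_mul, Matrix.mul_neg,
    Matrix.neg_mul, add_zero, zero_add, and_true, true_and] at hA
  exact ⟨ext fun i j => eq_zero_of_neg_eq_self h2 (congrFun₂ hA.1 i j),
    ext fun i j => eq_zero_of_neg_eq_self h2 (congrFun₂ hA.2 i j).symm⟩

variable (m o R) in
def fromBlocksMonoidHom : Matrix m m R × Matrix o o R →* Matrix (m ⊕ o) (m ⊕ o) R where
  toFun A := fromBlocks A.1 0 0 A.2
  map_one' := fromBlocks_one
  map_mul' A B := by simp [fromBlocks_multiply]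

namespace GeneralLinearGroup

variable (m o R) in
def fromBlocksHom : GL m R × GL o R →* GL (m ⊕ o) R :=
  (Units.map (fromBlocksMonoidHom m o R)).comp MulEquiv.prodUnits.symm.toMonoidHom

@[simp]
theorem val_fromBlocksHom (A : GL m R × GL o R) :
    (fromBlocksHom m o R A).val = fromBlocks A.1 0 0 A.2 := rfl

def toBlocks₁₁Hom (S : Subgroup (GL (m ⊕ o) R))
    (hS : ∀ g ∈ S, g.val.IsTwoBlockDiagonal) : S →* GL m R where
  toFun g :=
    { val := (g : GL (m ⊕ o) R).val.toBlocks₁₁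
      inv := (g⁻¹ : GL (m ⊕ o) R).val.toBlocks₁₁
      val_inv := by
        rw [← (hS g g.2).toBlocks₁₁_mul, ← Units.val_mul, mul_inv_cancel]
        simp [← fromBlocks_one]
      inv_val := by
        rw [← (hS _ (inv_mem g.2)).toBlocks₁₁_mul, ← Units.val_mul, inv_mul_cancel]
        simp [← fromBlocks_one] }
  map_one' := by ext1; simp [← fromBlocks_one]
  map_mul' g h := by ext1; exact (hS g g.2).toBlocks₁₁_mul _

@[simp]
theorem val_toBlocks₁₁Hom (S : Subgroup (GL (m ⊕ o) R))
    (hS : ∀ g ∈ S, g.val.IsTwoBlockDiagonal) (g : S) :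
    (toBlocks₁₁Hom S hS g).val = (g : GL (m ⊕ o) R).val.toBlocks₁₁ := rfl

end GeneralLinearGroup
end Matrix

open Matrix Matrix.GeneralLinearGroup Subgroup in
theorem IsAcceptable.GL_of_GL_sum {m o R : Type*} [Fintype m] [Fintype o] [DecidableEq m]
    [DecidableEq o] [Ring R] [NoZeroDivisors R] (h2 : (2 : R) ≠ 0)
    (h : IsAcceptable (GL (m ⊕ o) R)) : IsAcceptable (GL m R) := by
  let χ : ℤˣ →* GL (m ⊕ o) R := (fromBlocksHom m o R).comp
    ((MonoidHom.inr _ _).comp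
      ((GeneralLinearGroup.scalar o).comp (Units.map (Int.castRingHom R : ℤ →* R))))
  let ι : GL m R →* centralizer (Set.range χ) :=
    ((fromBlocksHom m o R).comp (MonoidHom.inl _ _)).codRestrict _ fun A =>
      mem_centralizer_iff.mpr fun _ ⟨u, hu⟩ =>
        hu ▸ ((MonoidHom.commute_inl_inr A _).map (fromBlocksHom m o R)).symm.eq
  have hblock (g) (hg : g ∈ centralizer (Set.range χ)) : g.val.IsTwoBlockDiagonal := by
    apply isTwoBlockDiagonal_of_commute_fromBlocks_one_neg_one h2
    have := congrArg Units.val (mem_centralizer_iff.mp hg (χ (-1)) ⟨-1, rfl⟩)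
    simpa [χ, Commute, SemiconjBy, ← Matrix.scalar_apply] using this.symm
  exact h.of_retract_centralizer χ ι (toBlocks₁₁Hom _ hblock) (by ext A : 2; simp [ι])

theorem GL_acceptable_descends (F : Type*) [Field F] (hchar : (2 : F) ≠ 0) (n : ℕ)
    (h : IsAcceptable (GL (Fin (n + 1)) F)) : IsAcceptable (GL (Fin n) F) := by
  have hsum : IsAcceptable (GL (Fin n ⊕ Fin 1) F) :=
    h.of_mulEquiv (Units.mapEquiv (Matrix.reindexAlgEquiv F F finSumFinEquiv).symm.toMulEquiv)
  exact hsum.GL_of_GL_sum hchar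
end

section
/- Let F be an algebraically closed field of characteristic p > 0 with p odd (so that -1 ≠ 1 and F is infinite). Then GL(n, F) is not acceptable for any n ≥ 2. -/
open Matrix Multiplicative

section Unipotent

variable {K A : Type*} [Ring A] {e : A}

section CommRing

variable [CommRing K] [Algebra K A]

def unipotentHom (he : e * e = 0) : Multiplicative K →* Aˣ where
  toFun t :=
    { val := 1 + t.toAdd • e
      inv := 1 - t.toAdd • e
      val_inv := by simp [mul_sub, add_mul, he]
      inv_val := by simp [sub_mul, mul_add, he] }
  map_one' := by ext; simp
  map_mul' s t := by
    ext
    simp only [toAdd_mul, Units.val_mul, mul_add, add_mul, smul_mul_smul_comm, he]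
    simp [add_smul, add_assoc]

theorem unipotentHom_apply (he : e * e = 0) (t : K) :
    (unipotentHom he (ofAdd t) : A) = 1 + t • e := rfl

theorem conj_unipotentHom_eq_iff (he : e * e = 0) (g : Aˣ) (s t : K) :
    g * unipotentHom he (ofAdd s) * g⁻¹ = unipotentHom he (ofAdd t) ↔
      s • (g * e * ↑g⁻¹ : A) = t • e := by
  rw [Units.ext_iff]
  simp only [Units.val_mul, unipotentHom_apply, mul_add, add_mul, mul_one, Units.mul_inv,
    mul_smul_comm, smul_mul_assoc, add_right_inj]

end CommRing

variable [Field K] [Algebra K A]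

theorem exists_conj_unipotentHom (he : e * e = 0)
    (hscale : ∀ c : K, c ≠ 0 → ∃ g : Aˣ, g * e * ↑g⁻¹ = c • e) {s t : K} (hs : s ≠ 0) (ht : t ≠ 0) :
    ∃ g : Aˣ, g * unipotentHom he (ofAdd s) * g⁻¹ = unipotentHom he (ofAdd t) := by
  obtain ⟨g, hg⟩ := hscale (t / s) (div_ne_zero ht hs)
  refine ⟨g, (conj_unipotentHom_eq_iff he g s t).2 ?_⟩
  rw [hg, smul_smul, mul_div_cancel₀ t hs]

theorem mul_self_eq_one_of_conj_unipotentHom_swap (he : e * e = 0) (he0 : e ≠ 0) {g : Aˣ} {b : K}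
    (h₁ : g * unipotentHom he (ofAdd (1 : K)) * g⁻¹ = unipotentHom he (ofAdd b))
    (h₂ : g * unipotentHom he (ofAdd b) * g⁻¹ = unipotentHom he (ofAdd (1 : K))) :
    b * b = 1 := by
  rw [conj_unipotentHom_eq_iff, one_smul] at h₁ h₂
  have : (b * b - 1) • e = 0 := by rw [sub_smul, mul_smul, ← h₁, h₂, one_smul, sub_self]
  simpa [sub_eq_zero, he0] using this

end Unipotent

theorem exists_conj_comp_toMultiplicative_of_eq_zero_iff {G H K : Type*} [Group G] [AddZeroClass H]
    [AddZeroClass K] (u : Multiplicative K →* G)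
    (hu : ∀ s t : K, s ≠ 0 → t ≠ 0 → ∃ g : G, g * u (ofAdd s) * g⁻¹ = u (ofAdd t))
    (ℓ₁ ℓ₂ : H →+ K) (hℓ : ∀ h, ℓ₁ h = 0 ↔ ℓ₂ h = 0) (h : Multiplicative H) :
    ∃ g : G, g * (u.comp (AddMonoidHom.toMultiplicative ℓ₁)) h * g⁻¹ =
      u.comp (AddMonoidHom.toMultiplicative ℓ₂) h := by
  simp only [MonoidHom.comp_apply, AddMonoidHom.toMultiplicative_apply_apply]
  by_cases h₁ : ℓ₁ h.toAdd = 0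
  · refine ⟨1, ?_⟩
    rw [h₁, (hℓ _).1 h₁]
    simp
  · exact hu _ _ h₁ (mt (hℓ _).2 h₁)

theorem exists_conj_single_eq_smul {n K : Type*} [Fintype n] [DecidableEq n] [Field K]
    {i j : n} (hij : i ≠ j) {c : K} (hc : c ≠ 0) :
    ∃ g : GL n K, (g : Matrix n n K) * single i j 1 * (↑g⁻¹ : Matrix n n K) = c • single i j 1 := by
  have hdiag {x y : K} (hxy : x * y = 1) :
      diagonal (Pi.mulSingle i x) * diagonal (Pi.mulSingle i y) = 1 := by
    simp only [diagonal_mul_diagonal, ← Pi.mul_apply, ← Pi.mulSingle_mul, hxy, Pi.mulSingle_one,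
      Pi.one_apply, diagonal_one]
  refine ⟨⟨diagonal (Pi.mulSingle i c), diagonal (Pi.mulSingle i c⁻¹),
    hdiag (mul_inv_cancel₀ hc), hdiag (inv_mul_cancel₀ hc)⟩, ?_⟩
  ext a b
  simp only [Units.inv_mk, Units.val_mk, mul_diagonal, diagonal_mul, Matrix.smul_apply]
  by_cases h : i = a ∧ j = b
  · obtain ⟨rfl, rfl⟩ := h
    simp [hij.symm]
  · simp [single, h]

theorem eq_zero_of_add_mul_eq_zero {K L : Type*} [DivisionRing K] [Field L] (f : K →+* L) {b : L}
    (hb : b ∉ Set.range f) {x y : K} (h : f x + b * f y = 0) : x = 0 ∧ y = 0 := by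
  obtain rfl | hy := eq_or_ne y 0
  · simpa using h
  · refine absurd ⟨-x / y, ?_⟩ hb
    rw [map_div₀, map_neg, div_eq_iff ((map_ne_zero f).2 hy)]
    linear_combination -h

section PairForm

variable {K L : Type*} [DivisionRing K] [Field L] (f : K →+* L)

def pairForm (a c : L) : K × K →+ L :=
  AddMonoidHom.mk' (fun v => a * f v.1 + c * f v.2) fun v w => by
    simp only [Prod.fst_add, Prod.snd_add, map_add]
    ring

variable {f} {b : L}

theorem pairForm_one_left_eq_zero_iff (hb : b ∉ Set.range f) (v : K × K) :
    pairForm f 1 b v = 0 ↔ v = 0 := by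
  refine ⟨fun h => ?_, fun h => by rw [h, map_zero]⟩
  obtain ⟨h₁, h₂⟩ := eq_zero_of_add_mul_eq_zero f hb (by simpa [pairForm] using h)
  exact Prod.ext h₁ h₂

theorem pairForm_one_right_eq_zero_iff (hb : b ∉ Set.range f) (v : K × K) :
    pairForm f b 1 v = 0 ↔ v = 0 := by
  have : pairForm f b 1 v = pairForm f 1 b v.swap := by simp [pairForm, add_comm]
  rw [this, pairForm_one_left_eq_zero_iff hb, Prod.swap_eq_iff_eq_swap, Prod.swap_zero]

end PairForm

theorem GL_not_acceptable_general (F : Type) [Field F] [IsAlgClosed F] (p : ℕ) [Fact p.Prime]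
    [CharP F p] (n : ℕ) (hn : 2 ≤ n) : ¬ IsAcceptable (GL (Fin n) F) := by
  intro hacc
  let i : Fin n := ⟨0, by omega⟩
  let j : Fin n := ⟨1, by omega⟩
  have hij : i ≠ j := by simp [i, j, Fin.ext_iff]
  have he : single i j (1 : F) * single i j 1 = 0 :=
    single_mul_single_of_ne (c := 1) i j i hij.symm 1
  have he0 : single i j (1 : F) ≠ 0 := fun h =>
    one_ne_zero (α := F) (by simpa using congrFun₂ h i j)
  let u := unipotentHom (K := F) he
  let f := ZMod.castHom (dvd_refl p) F
  obtain ⟨b, hb⟩ : ∃ b, b ∉ Set.range f := (Set.finite_range f).infinite_compl.nonempty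
  let φ (a c : F) := u.comp (AddMonoidHom.toMultiplicative (pairForm f a c))
  have hconj : ∀ h, ∃ g, g * φ 1 b h * g⁻¹ = φ b 1 h :=
    exists_conj_comp_toMultiplicative_of_eq_zero_iff u
      (fun _ _ hs ht => exists_conj_unipotentHom he (fun _ => exists_conj_single_eq_smul hij) hs ht)
      _ _ fun v => by rw [pairForm_one_left_eq_zero_iff hb, pairForm_one_right_eq_zero_iff hb]
  obtain ⟨g, hg⟩ := hacc _ _ inferInstance _ _ hconj
  have hb2 : b * b = 1 := mul_self_eq_one_of_conj_unipotentHom_swap he he0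
    (by simpa [φ, u, pairForm] using hg (ofAdd (1, 0)))
    (by simpa [φ, u, pairForm] using hg (ofAdd (0, 1)))
  rcases mul_self_eq_one_iff.mp hb2 with rfl | rfl
  exacts [hb ⟨1, map_one f⟩, hb ⟨-1, by simp⟩]

theorem GL_not_acceptable (F : Type) [Field F] [IsAlgClosed F] (p : ℕ) [Fact p.Prime]
    [CharP F p] (hp : p ≠ 2) (n : ℕ) (hn : 2 ≤ n) : ¬ IsAcceptable (GL (Fin n) F) :=
  GL_not_acceptable_general F p n hn
end

section
/- Let F be an algebraically closed field of odd characteristic p. Then SL(2n+1, F) is not acceptable for any n ≥ 1. -/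
/-!
Take `H = (ℤ/p)²` and map it into `SL₃(F)`, hence into `SL(ι)` by a block embedding, in two ways:
`(a, b) ↦ 1 + a E₀₁ + b E₀₂` and `(a, b) ↦ 1 + a E₀₂ + b E₁₂`. For each `(a, b)` the two images are
conjugate by an explicit matrix of `GL₃`, which can be rescaled into `SL` because `F` has all roots.
A global conjugator `g` would satisfy `g E₀₁ = E₀₂ g` and `g E₀₂ = E₁₂ g`: the first forces
column `0` of `g` to vanish off row `0`, the second off row `1`, so `det g = 0`.
-/

namespace Matrix

section Unipotent

variable {R : Type*} [CommRing R]

def firstRowUnipotent (a b : R) : Matrix (Fin 3) (Fin 3) R := !![1, a, b; 0, 1, 0; 0, 0, 1]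

def lastColumnUnipotent (a b : R) : Matrix (Fin 3) (Fin 3) R := !![1, 0, a; 0, 1, b; 0, 0, 1]

lemma firstRowUnipotent_eq (a b : R) :
    firstRowUnipotent a b = 1 + single 0 1 a + single 0 2 b := by
  ext i j; fin_cases i <;> fin_cases j <;> simp [firstRowUnipotent]

lemma lastColumnUnipotent_eq (a b : R) :
    lastColumnUnipotent a b = 1 + single 0 2 a + single 1 2 b := by
  ext i j; fin_cases i <;> fin_cases j <;> simp [lastColumnUnipotent]

lemma firstRowUnipotent_mul (a b a' b' : R) :
    firstRowUnipotent a b * firstRowUnipotent a' b' = firstRowUnipotent (a + a') (b + b') := by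
  ext i j
  fin_cases i <;> fin_cases j <;> simp [firstRowUnipotent, mul_apply, Fin.sum_univ_three, add_comm]

lemma lastColumnUnipotent_mul (a b a' b' : R) :
    lastColumnUnipotent a b * lastColumnUnipotent a' b' =
      lastColumnUnipotent (a + a') (b + b') := by
  ext i j
  fin_cases i <;> fin_cases j <;>
    simp [lastColumnUnipotent, mul_apply, Fin.sum_univ_three, add_comm]

lemma det_firstRowUnipotent (a b : R) : (firstRowUnipotent a b).det = 1 := by
  simp [firstRowUnipotent, det_fin_three]

lemma det_lastColumnUnipotent (a b : R) : (lastColumnUnipotent a b).det = 1 := by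
  simp [lastColumnUnipotent, det_fin_three]

end Unipotent

lemma exists_mul_firstRowUnipotent_eq {F : Type*} [Field F] (a b : F) :
    ∃ X : Matrix (Fin 3) (Fin 3) F,
      X.det ≠ 0 ∧ X * firstRowUnipotent a b = lastColumnUnipotent a b * X := by
  -- `X` must have first column `(a, b, 0)` and last row `(0, a, b)`; its other entries only
  -- serve to make it invertible.
  by_cases hb : b = 0
  · by_cases ha : a = 0
    · exact ⟨1, by simp, by simp [ha, hb, firstRowUnipotent_eq, lastColumnUnipotent_eq]⟩
    refine ⟨!![a, 0, 0; 0, 0, 1; 0, a, 0], by simpa [det_fin_three] using ha, ?_⟩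
    ext i j
    fin_cases i <;> fin_cases j <;>
      simp [hb, firstRowUnipotent, lastColumnUnipotent, mul_apply, Fin.sum_univ_three]
  · refine ⟨!![a, 1, 0; b, 0, 0; 0, a, b], by simpa [det_fin_three] using hb, ?_⟩
    ext i j
    fin_cases i <;> fin_cases j <;>
      simp [firstRowUnipotent, lastColumnUnipotent, mul_apply, Fin.sum_univ_three, mul_comm,
        add_comm]

section Blocks

variable {R : Type*} [CommRing R] {m κ ι : Type*} [DecidableEq m] [DecidableEq κ] [DecidableEq ι]

lemma reindex_fromBlocks_sub_one (e : m ⊕ κ ≃ ι) (M : Matrix m m R) :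
    reindex e e (fromBlocks M 0 0 1) - 1 =
      reindex e e (fromBlocks (M - 1) 0 0 (0 : Matrix κ κ R)) := by
  have h : fromBlocks M 0 0 1 - 1 = fromBlocks (M - 1) 0 0 (0 : Matrix κ κ R) := by
    ext (r | r) (s | s) <;> simp [one_apply]
  rw [← h]
  ext r s
  simp [one_apply]

lemma reindex_fromBlocks_single (e : m ⊕ κ ≃ ι) (i j : m) (c : R) :
    reindex e e (fromBlocks (single i j c) 0 0 (0 : Matrix κ κ R)) =
      single (e (.inl i)) (e (.inl j)) c := by
  have h : fromBlocks (single i j c) 0 0 (0 : Matrix κ κ R) = single (.inl i) (.inl j) c := by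
    ext (r | r) (s | s) <;> simp [single_apply]
  rw [reindex_apply, h, submatrix_single_equiv]
  simp

end Blocks

section Singles

variable {R : Type*} [CommRing R] {ι : Type*} [Fintype ι] [DecidableEq ι] {g : Matrix ι ι R}

lemma apply_eq_zero_of_mul_single_eq_single_mul {i j k l r : ι}
    (h : g * single k l 1 = single i j 1 * g) (hr : r ≠ i) : g r k = 0 := by
  simpa [hr] using congrFun (congrFun h r) l

lemma det_eq_zero_of_mul_single_eq_single_mul {i j k : ι} (hij : i ≠ j)
    (h₁ : g * single i j 1 = single i k 1 * g) (h₂ : g * single i k 1 = single j k 1 * g) :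
    g.det = 0 := by
  refine det_eq_zero_of_column_eq_zero i fun r => ?_
  obtain rfl | hr := eq_or_ne r i
  · exact apply_eq_zero_of_mul_single_eq_single_mul h₂ hij
  · exact apply_eq_zero_of_mul_single_eq_single_mul h₁ hr

end Singles

namespace SpecialLinearGroup

section CommRing

variable {R : Type*} [CommRing R]

def firstRowUnipotentHom : Multiplicative (R × R) →* SpecialLinearGroup (Fin 3) R where
  toFun x := ⟨firstRowUnipotent x.toAdd.1 x.toAdd.2, det_firstRowUnipotent _ _⟩
  map_one' := Subtype.ext <| by simp [firstRowUnipotent_eq]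
  map_mul' x y := Subtype.ext (firstRowUnipotent_mul ..).symm

lemma coe_firstRowUnipotentHom (x : Multiplicative (R × R)) :
    (firstRowUnipotentHom x : Matrix (Fin 3) (Fin 3) R) =
      firstRowUnipotent x.toAdd.1 x.toAdd.2 := rfl

def lastColumnUnipotentHom : Multiplicative (R × R) →* SpecialLinearGroup (Fin 3) R where
  toFun x := ⟨lastColumnUnipotent x.toAdd.1 x.toAdd.2, det_lastColumnUnipotent _ _⟩
  map_one' := Subtype.ext <| by simp [lastColumnUnipotent_eq]
  map_mul' x y := Subtype.ext (lastColumnUnipotent_mul ..).symm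

lemma coe_lastColumnUnipotentHom (x : Multiplicative (R × R)) :
    (lastColumnUnipotentHom x : Matrix (Fin 3) (Fin 3) R) =
      lastColumnUnipotent x.toAdd.1 x.toAdd.2 := rfl

variable {m κ ι : Type*} [Fintype m] [DecidableEq m] [Fintype κ] [DecidableEq κ] [Fintype ι]
  [DecidableEq ι]

def blockEmbedding (e : m ⊕ κ ≃ ι) : SpecialLinearGroup m R →* SpecialLinearGroup ι R where
  toFun A := ⟨reindex e e (fromBlocks A 0 0 1), by simp⟩
  map_one' := Subtype.ext <| by simp
  map_mul' A B := Subtype.ext <| by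
    change reindex e e _ = reindex e e _ * reindex e e _
    simp [fromBlocks_multiply, submatrix_mul_equiv]

lemma coe_blockEmbedding_sub_one (e : m ⊕ κ ≃ ι) (A : SpecialLinearGroup m R) :
    (blockEmbedding e A : Matrix ι ι R) - 1 =
      reindex e e (fromBlocks ((A : Matrix m m R) - 1) 0 0 (0 : Matrix κ κ R)) :=
  reindex_fromBlocks_sub_one e _

lemma coe_mul_sub_one_eq_of_conj {g A B : SpecialLinearGroup ι R} (h : g * A * g⁻¹ = B) :
    (g : Matrix ι ι R) * (A - 1) = (B - 1) * g := by
  rw [mul_inv_eq_iff_eq_mul] at h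
  rw [mul_sub, sub_mul, mul_one, one_mul, ← coe_mul, h, coe_mul]

end CommRing

variable {F : Type*} [Field F] [IsAlgClosed F]

lemma isConj_of_mul_eq_mul {n : Type*} [Fintype n] [DecidableEq n] [Nonempty n]
    {A B : SpecialLinearGroup n F} {X : Matrix n n F} (hX : X.det ≠ 0) (h : X * A = B * X) :
    IsConj A B := by
  obtain ⟨c, hc⟩ := IsAlgClosed.exists_pow_nat_eq X.det⁻¹ (Fintype.card_pos (α := n))
  let g : SpecialLinearGroup n F := ⟨c • X, by rw [det_smul, hc, inv_mul_cancel₀ hX]⟩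
  refine isConj_iff.mpr ⟨g, mul_inv_eq_iff_eq_mul.mpr (Subtype.ext ?_)⟩
  change c • X * A = B * (c • X)
  rw [smul_mul_assoc, mul_smul_comm, h]

lemma isConj_firstRowUnipotentHom_lastColumnUnipotentHom (x : Multiplicative (F × F)) :
    IsConj (firstRowUnipotentHom x) (lastColumnUnipotentHom x) :=
  let ⟨_, hX, h⟩ := exists_mul_firstRowUnipotent_eq x.toAdd.1 x.toAdd.2
  isConj_of_mul_eq_mul hX h

theorem not_isAcceptable (p : ℕ) [NeZero p] [CharP F p] {ι : Type*} [Fintype ι] [DecidableEq ι]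
    (hι : 3 ≤ Fintype.card ι) : ¬ IsAcceptable (SpecialLinearGroup ι F) := by
  intro hacc
  let e : Fin 3 ⊕ Fin (Fintype.card ι - 3) ≃ ι :=
    finSumFinEquiv.trans ((finCongr (by omega)).trans (Fintype.equivFin ι).symm)
  let f := (ZMod.castHom dvd_rfl F).toAddMonoidHom
  let cast : Multiplicative (ZMod p × ZMod p) →* Multiplicative (F × F) :=
    AddMonoidHom.toMultiplicative (f.prodMap f)
  obtain ⟨g, hg⟩ := hacc _ inferInstance inferInstance
    ((blockEmbedding e).comp (firstRowUnipotentHom.comp cast))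
    ((blockEmbedding e).comp (lastColumnUnipotentHom.comp cast)) fun x => isConj_iff.mp <|
      (blockEmbedding e).map_isConj (isConj_firstRowUnipotentHom_lastColumnUnipotentHom (cast x))
  have h₁ := coe_mul_sub_one_eq_of_conj (hg (.ofAdd (1, 0)))
  have h₂ := coe_mul_sub_one_eq_of_conj (hg (.ofAdd (0, 1)))
  have hcast (a b : ZMod p) : cast (.ofAdd (a, b)) = .ofAdd ((a.cast : F), (b.cast : F)) := rfl
  simp only [MonoidHom.comp_apply, hcast, coe_blockEmbedding_sub_one, coe_firstRowUnipotentHom,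
    coe_lastColumnUnipotentHom, toAdd_ofAdd, ZMod.cast_one', ZMod.cast_zero, firstRowUnipotent_eq,
    lastColumnUnipotent_eq, single_zero, add_zero, add_sub_cancel_left,
    reindex_fromBlocks_single] at h₁ h₂
  have h := det_eq_zero_of_mul_single_eq_single_mul (by simp) h₁ h₂
  rw [det_coe] at h
  exact one_ne_zero h

end SpecialLinearGroup

end Matrix

theorem SL_odd_not_acceptable_general (F : Type) [Field F] [IsAlgClosed F] (p : ℕ) [Fact p.Prime]
    [CharP F p] (n : ℕ) (hn : 1 ≤ n) :
    ¬ IsAcceptable (Matrix.SpecialLinearGroup (Fin (2 * n + 1)) F) :=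
  Matrix.SpecialLinearGroup.not_isAcceptable p (by simp; omega)

theorem SL_odd_not_acceptable (F : Type) [Field F] [IsAlgClosed F] (p : ℕ) [Fact p.Prime]
    [CharP F p] (hp : p ≠ 2) (n : ℕ) (hn : 1 ≤ n) :
    ¬ IsAcceptable (Matrix.SpecialLinearGroup (Fin (2 * n + 1)) F) :=
  SL_odd_not_acceptable_general F p n hn
end

section
/- Let F be a field such that the n-th power map ψ_n : Fˣ → Fˣ, ψ_n(x) = xⁿ, is bijective. If SL(n, F) is acceptable, then GL(n, F) is acceptable. -/
open Matrix

namespace SLGL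

variable {F : Type} [Field F] {n : ℕ}

/-- scaling hom: `c g` is the `n`-th root of `det g`. -/
noncomputable def cHom (hψ : Function.Bijective (fun x : Fˣ => x ^ n)) :
    GL (Fin n) F →* Fˣ :=
  ((MulEquiv.ofBijective (powMonoidHom n : Fˣ →* Fˣ) hψ).symm : Fˣ →* Fˣ).comp
    Matrix.GeneralLinearGroup.det

lemma cHom_pow (hψ : Function.Bijective (fun x : Fˣ => x ^ n)) (g : GL (Fin n) F) :
    (cHom hψ g) ^ n = Matrix.GeneralLinearGroup.det g := by
  have := (MulEquiv.ofBijective (powMonoidHom n : Fˣ →* Fˣ) hψ).apply_symm_apply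
    (Matrix.GeneralLinearGroup.det g)
  exact this

lemma det_scaled (hψ : Function.Bijective (fun x : Fˣ => x ^ n)) (g : GL (Fin n) F) :
    Matrix.det ((((cHom hψ g)⁻¹ : Fˣ) : F) • (↑g : Matrix (Fin n) (Fin n) F)) = 1 := by
  have key : ((cHom hψ g)⁻¹) ^ n * Matrix.GeneralLinearGroup.det g = 1 := by
    rw [inv_pow, cHom_pow hψ g, inv_mul_cancel]
  have := congrArg Units.val key
  simpa [Matrix.det_smul, Units.val_mul, Units.val_pow_eq_pow_val] using this

/-- The scaling map `GL → SL`. -/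
noncomputable def slOf (hψ : Function.Bijective (fun x : Fˣ => x ^ n)) :
    GL (Fin n) F →* Matrix.SpecialLinearGroup (Fin n) F :=
  MonoidHom.mk' (fun g => ⟨(((cHom hψ g)⁻¹ : Fˣ) : F) • (↑g : Matrix (Fin n) (Fin n) F),
      det_scaled hψ g⟩)
    (by
      intro g₁ g₂
      apply Subtype.ext
      show (((cHom hψ (g₁ * g₂))⁻¹ : Fˣ) : F) • (↑(g₁ * g₂) : Matrix (Fin n) (Fin n) F)
          = ((((cHom hψ g₁)⁻¹ : Fˣ) : F) • (↑g₁ : Matrix (Fin n) (Fin n) F)) *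
            ((((cHom hψ g₂)⁻¹ : Fˣ) : F) • (↑g₂ : Matrix (Fin n) (Fin n) F))
      rw [_root_.map_mul, mul_inv, Units.val_mul, Units.val_mul, mul_smul,
        smul_mul_assoc, mul_smul_comm])

lemma slOf_coe (hψ : Function.Bijective (fun x : Fˣ => x ^ n)) (g : GL (Fin n) F) :
    (↑(slOf hψ g) : Matrix (Fin n) (Fin n) F)
      = (((cHom hψ g)⁻¹ : Fˣ) : F) • (↑g : Matrix (Fin n) (Fin n) F) := rfl

end SLGL

theorem SL_acceptable_implies_GL (F : Type) [Field F] (n : ℕ)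
    (hψ : Function.Bijective (fun x : Fˣ => x ^ n))
    (h : IsAcceptable (Matrix.SpecialLinearGroup (Fin n) F)) :
    IsAcceptable (GL (Fin n) F) := by
  intro H hH hF φ₁ φ₂ hconj
  set sl := SLGL.slOf (F := F) (n := n) hψ with hsl
  have hΦconj : ∀ x : H, ∃ s : Matrix.SpecialLinearGroup (Fin n) F,
      s * (sl.comp φ₁) x * s⁻¹ = (sl.comp φ₂) x := by
    intro x
    obtain ⟨g, hg⟩ := hconj x
    refine ⟨sl g, ?_⟩
    simp only [MonoidHom.comp_apply]
    rw [← _root_.map_inv sl, ← _root_.map_mul sl, ← _root_.map_mul sl, hg]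
  obtain ⟨s, hs⟩ := h H hH hF (sl.comp φ₁) (sl.comp φ₂) hΦconj
  refine ⟨Matrix.SpecialLinearGroup.toGL s, fun x => ?_⟩
  -- determinants agree
  obtain ⟨g, hg⟩ := hconj x
  have hdet0 : Matrix.GeneralLinearGroup.det (φ₁ x) = Matrix.GeneralLinearGroup.det (φ₂ x) := by
    rw [← hg, _root_.map_mul, _root_.map_mul, _root_.map_inv, mul_comm, inv_mul_cancel_left]
  have hdet : SLGL.cHom hψ (φ₁ x) = SLGL.cHom hψ (φ₂ x) := by
    unfold SLGL.cHom
    rw [MonoidHom.comp_apply, MonoidHom.comp_apply, hdet0]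
  have hmat : (s : Matrix.SpecialLinearGroup (Fin n) F).val * (φ₁ x).val * (s⁻¹ : Matrix.SpecialLinearGroup (Fin n) F).val = (φ₂ x).val := by
    have hm := congrArg Subtype.val (hs x)
    rw [Matrix.SpecialLinearGroup.coe_mul, Matrix.SpecialLinearGroup.coe_mul,
      MonoidHom.comp_apply, MonoidHom.comp_apply, SLGL.slOf_coe, SLGL.slOf_coe, ← hdet,
      Matrix.mul_smul, Matrix.smul_mul] at hm
    have hu : ((SLGL.cHom hψ (φ₁ x))⁻¹ : Fˣ) •
        ((s : Matrix.SpecialLinearGroup (Fin n) F).val * (φ₁ x).val *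
          (s⁻¹ : Matrix.SpecialLinearGroup (Fin n) F).val)
        = ((SLGL.cHom hψ (φ₁ x))⁻¹ : Fˣ) • (φ₂ x).val := hm
    exact smul_left_cancel _ hu
  apply Units.ext
  show (Matrix.SpecialLinearGroup.toGL s).val * (φ₁ x).val *
    ((Matrix.SpecialLinearGroup.toGL s)⁻¹).val = (φ₂ x).val
  rw [← _root_.map_inv Matrix.SpecialLinearGroup.toGL]
  exact hmat
end

section
/- Let F be an algebraically closed field of odd characteristic p. Then SL(n, F) is not acceptable for any n ≥ 2. -/
namespace Matrix

variable {ι R : Type*} [DecidableEq ι] [Fintype ι]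

lemma diagonal_mul_single [NonUnitalNonAssocSemiring R] (d : ι → R) (i j : ι) (b : R) :
    diagonal d * single i j b = single i j (d i * b) := by
  ext k l
  rw [diagonal_mul, single_apply, single_apply]
  split_ifs with h <;> simp_all

lemma single_mul_diagonal [NonUnitalNonAssocSemiring R] (d : ι → R) (i j : ι) (b : R) :
    single i j b * diagonal d = single i j (b * d j) := by
  ext k l
  rw [mul_diagonal, single_apply, single_apply]
  split_ifs with h <;> simp_all

namespace SpecialLinearGroup

variable [CommRing R] {i j : ι}

def transvectionHom (hij : i ≠ j) : Multiplicative R →* SpecialLinearGroup ι R where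
  toFun b := transvection hij b.toAdd
  map_one' := transvection_coeff_zero hij
  map_mul' _ _ := transvection_add hij _ _

def corootElement (i j : ι) (t : Rˣ) : SpecialLinearGroup ι R :=
  ⟨diagonal (Pi.mulSingle i (t : R) * Pi.mulSingle j ↑t⁻¹), by
    simp [det_diagonal, Finset.prod_mul_distrib, Finset.prod_pi_mulSingle']⟩

lemma coe_corootElement (i j : ι) (t : Rˣ) :
    (corootElement i j t : Matrix ι ι R) =
      diagonal (Pi.mulSingle i (t : R) * Pi.mulSingle j ↑t⁻¹) :=
  rfl

lemma corootElement_mul_transvection_mul_inv (hij : i ≠ j) (t : Rˣ) (b : R) :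
    corootElement i j t * transvection hij b * (corootElement i j t)⁻¹ =
      transvection hij (t ^ 2 * b) := by
  rw [mul_inv_eq_iff_eq_mul]
  apply Subtype.ext
  rw [coe_mul, coe_mul, coe_corootElement, transvection_coe, transvection_coe, mul_add, add_mul,
    mul_one, one_mul, diagonal_mul_single, single_mul_diagonal]
  congr 2
  simp only [Pi.mul_apply, Pi.mulSingle_eq_same, Pi.mulSingle_eq_of_ne hij,
    Pi.mulSingle_eq_of_ne hij.symm, mul_one, one_mul]
  rw [sq, mul_right_comm _ b, Units.mul_inv_cancel_right]

lemma isConj_transvection {F : Type*} [Field F] [IsAlgClosed F] (hij : i ≠ j) {x y : F}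
    (hx : x ≠ 0) (hy : y ≠ 0) :
    IsConj (transvection hij x) (transvection hij y) := by
  obtain ⟨t, ht⟩ := IsAlgClosed.exists_pow_nat_eq (y / x) two_pos
  have ht₀ : t ≠ 0 := by
    rintro rfl
    exact div_ne_zero hy hx (by simpa using ht.symm)
  refine isConj_iff.2 ⟨corootElement i j (Units.mk0 t ht₀), ?_⟩
  rw [corootElement_mul_transvection_mul_inv, Units.val_mk0, ht, div_mul_cancel₀ y hx]

lemma coe_mul_transvection_mul_inv (g : SpecialLinearGroup ι R) (hij : i ≠ j) (b : R) :
    ((g * transvection hij b * g⁻¹ : SpecialLinearGroup ι R) : Matrix ι ι R) =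
      1 + b • ((g : Matrix ι ι R) * single i j 1 *
        ((g⁻¹ : SpecialLinearGroup ι R) : Matrix ι ι R)) := by
  have hb : single i j b = b • single i j (1 : R) := by rw [smul_single, smul_eq_mul, mul_one]
  rw [coe_mul, coe_mul, transvection_coe, mul_add, add_mul, mul_one, ← coe_mul, mul_inv_cancel,
    coe_one, hb, Matrix.mul_smul, Matrix.smul_mul]

/-- Conjugation by `g` acts linearly on `1 + b Eᵢⱼ`: by `h₁` it scales `Eᵢⱼ` by `s`, so `h₂`
reads `s² Eᵢⱼ = Eᵢⱼ`. -/
lemma sq_eq_one_of_conj_transvection (hij : i ≠ j) (g : SpecialLinearGroup ι R) {s : R}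
    (h₁ : g * transvection hij 1 * g⁻¹ = transvection hij s)
    (h₂ : g * transvection hij s * g⁻¹ = transvection hij 1) : s ^ 2 = 1 := by
  have h₁' := congrArg Subtype.val h₁
  have h₂' := congrArg Subtype.val h₂
  rw [coe_mul_transvection_mul_inv, transvection_coe, one_smul, add_right_inj] at h₁'
  rw [coe_mul_transvection_mul_inv, transvection_coe, add_right_inj] at h₂'
  rw [h₁', smul_single, smul_eq_mul, ← sq] at h₂'
  simpa using congrFun (congrFun h₂' i) j

lemma isConj_transvectionHom_comp {F A : Type*} [Field F] [IsAlgClosed F] [AddGroup A]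
    (hij : i ≠ j) {ψ₁ ψ₂ : A →+ F}
    (hψ : ∀ a, ψ₁ a = 0 ↔ ψ₂ a = 0) (a : Multiplicative A) :
    IsConj ((transvectionHom hij).comp ψ₁.toMultiplicative a)
      ((transvectionHom hij).comp ψ₂.toMultiplicative a) := by
  change IsConj (transvection hij (ψ₁ a.toAdd)) (transvection hij (ψ₂ a.toAdd))
  by_cases h : ψ₁ a.toAdd = 0
  · rw [h, (hψ _).1 h]
  · exact isConj_transvection hij h (mt (hψ _).2 h)

end SpecialLinearGroup
end Matrix

open Matrix SpecialLinearGroup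

section

variable {K F : Type*} [Field K] [Field F]

def lincombWith (f : K →+* F) (s : F) : K × K →+ F :=
  AddMonoidHom.mk' (fun v ↦ f v.1 + s * f v.2) fun v w ↦ by
    simp only [Prod.fst_add, Prod.snd_add, map_add]
    ring

@[simp]
lemma lincombWith_apply (f : K →+* F) (s : F) (v : K × K) :
    lincombWith f s v = f v.1 + s * f v.2 :=
  rfl

lemma lincombWith_eq_zero_iff {f : K →+* F} {s : F} (hs : s ∉ Set.range f) {v : K × K} :
    lincombWith f s v = 0 ↔ v = 0 := by
  obtain ⟨a, b⟩ := v
  refine ⟨fun h ↦ ?_, fun h ↦ by simp_all⟩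
  rw [lincombWith_apply] at h
  obtain rfl : b = 0 := by
    by_contra hb
    refine hs ⟨-a / b, ?_⟩
    rw [map_div₀, map_neg, div_eq_iff ((map_ne_zero f).2 hb)]
    linear_combination -h
  simp_all

end

theorem not_isAcceptable_specialLinearGroup {ι F : Type*} [DecidableEq ι] [Fintype ι] [Field F]
    [IsAlgClosed F] {i j : ι} (hij : i ≠ j) {K : Type} [Field K] [Finite K] (f : K →+* F) :
    ¬ IsAcceptable (SpecialLinearGroup ι F) := by
  obtain ⟨s, hs⟩ : ∃ s, s ∉ Set.range f := (Set.finite_range f).infinite_compl.nonempty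
  let ψ := lincombWith f s
  have hψ (v : K × K) : ψ v = 0 ↔ ψ v.swap = 0 := by
    rw [lincombWith_eq_zero_iff hs, lincombWith_eq_zero_iff hs, Prod.swap_eq_iff_eq_swap,
      Prod.swap_zero]
  intro hacc
  obtain ⟨g, hg⟩ := hacc (Multiplicative (K × K)) inferInstance inferInstance
    ((transvectionHom hij).comp ψ.toMultiplicative)
    ((transvectionHom hij).comp (ψ.comp (AddEquiv.prodComm : K × K ≃+ K × K)).toMultiplicative)
    fun a ↦ isConj_iff.1 (isConj_transvectionHom_comp hij hψ a)
  have hs2 : s ^ 2 = 1 := sq_eq_one_of_conj_transvection hij g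
    (by simpa [ψ, transvectionHom] using hg (.ofAdd (1, 0)))
    (by simpa [ψ, transvectionHom] using hg (.ofAdd (0, 1)))
  rcases sq_eq_one_iff.1 hs2 with rfl | rfl
  · exact hs ⟨1, map_one f⟩
  · exact hs ⟨-1, by simp⟩

theorem SL_not_acceptable_general (F : Type) [Field F] [IsAlgClosed F] (p : ℕ) [Fact p.Prime]
    [CharP F p] (n : ℕ) (hn : 2 ≤ n) :
    ¬ IsAcceptable (Matrix.SpecialLinearGroup (Fin n) F) :=
  not_isAcceptable_specialLinearGroup (i := ⟨0, by omega⟩) (j := ⟨1, by omega⟩) (by simp)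
    (ZMod.castHom dvd_rfl F : ZMod p →+* F)

theorem SL_not_acceptable (F : Type) [Field F] [IsAlgClosed F] (p : ℕ) [Fact p.Prime]
    [CharP F p] (hp : p ≠ 2) (n : ℕ) (hn : 2 ≤ n) :
    ¬ IsAcceptable (Matrix.SpecialLinearGroup (Fin n) F) :=
  SL_not_acceptable_general F p n hn
end

section
/- Let F be a field with char F ≠ 2 and let Sp(2m, F) be defined with respect to the standard alternating form. The centralizer in Sp(2m+2, F) of a suitable semisimple element a = diag(λ, λ⁻¹) ⊕ s (where λ ∈ Fˣ, λ² ≠ 1, and s ∈ Sp(2m, F) is appropriately chosen) contains a direct factor decomposition isomorphic to Fˣ × Sp(2m, F). Consequently, if Sp(2m+2, F) is acceptable then Sp(2m, F) is acceptable. -/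
open Matrix

/-- The subgroup of `GL n F` preserving the bilinear form with Gram matrix `J`,
i.e. matrices `A` with `ᵗA J A = J`. -/
def formGroup {n : Type*} [Fintype n] [DecidableEq n] {F : Type*} [Field F]
    (J : Matrix n n F) : Subgroup (GL n F) where
  carrier := {A | (A : Matrix n n F)ᵀ * J * (A : Matrix n n F) = J}
  one_mem' := by simp
  mul_mem' := by
    intro A B hA hB
    simp only [Set.mem_setOf_eq] at *
    have hc : ((A * B : GL n F) : Matrix n n F) = (A : Matrix n n F) * B := rfl
    rw [hc, transpose_mul]
    calc (B : Matrix n n F)ᵀ * (A : Matrix n n F)ᵀ * J * ((A : Matrix n n F) * B)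
        = (B : Matrix n n F)ᵀ * ((A : Matrix n n F)ᵀ * J * A) * B := by
          simp only [Matrix.mul_assoc]
      _ = J := by rw [hA]; exact hB
  inv_mem' := by
    intro A hA
    simp only [Set.mem_setOf_eq] at *
    have h1 : ((A : GL n F) : Matrix n n F) * ((A⁻¹ : GL n F) : Matrix n n F) = 1 :=
      A.mul_inv
    calc ((A⁻¹ : GL n F) : Matrix n n F)ᵀ * J * ((A⁻¹ : GL n F) : Matrix n n F)
        = ((A⁻¹ : GL n F) : Matrix n n F)ᵀ * ((A : Matrix n n F)ᵀ * J * A) *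
            ((A⁻¹ : GL n F) : Matrix n n F) := by rw [hA]
      _ = (((A : GL n F) : Matrix n n F) * ((A⁻¹ : GL n F) : Matrix n n F))ᵀ *
            (J * (((A : GL n F) : Matrix n n F) * ((A⁻¹ : GL n F) : Matrix n n F))) := by
          rw [transpose_mul]; simp only [Matrix.mul_assoc]
      _ = J := by rw [h1]; simp

/-- The symplectic group  for the standard skew-symmetric form. -/
def SpGroup (m : ℕ) (F : Type*) [Field F] : Subgroup (GL (Fin m ⊕ Fin m) F) :=
  formGroup (Matrix.fromBlocks 0 1 (-1) 0)

/-!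
Let `V ⊕ P` be the orthogonal decomposition of the standard symplectic space of dimension
`2m + 2` with `P` a hyperbolic plane. If `d ∈ Sp(P)` has no eigenvalue `1`, any `g` commuting
with `1 ⊕ d` preserves both `V = ker((1 ⊕ d) - 1)` and `P = im((1 ⊕ d) - 1)`, so the
centralizer of `1 ⊕ d` is `Sp(V) × C(d)`. For `d = diag(λ, λ⁻¹)` with `λ² ≠ 1` the centralizer
of `d` in `Sp(P) = SL₂` is the diagonal torus `≅ Fˣ`, which gives the first claim.

For the second, take `d = -1` (no eigenvalue `1` as `char F ≠ 2`), so `c = 1 ⊕ -1` has order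
two. Acceptability passes to the centralizer of an element `c` of finite order: element-conjugate
`φ₁, φ₂ : H → C(c)` extend to element-conjugate `H × ⟨c⟩ → G`, and a global conjugator of the
extensions fixes `c`. It also passes to direct factors, hence from `Sp(2m+2)` to
`C(c) ≅ Sp(2m) × C(-1)` and on to `Sp(2m)`.
-/

namespace IsAcceptable

variable {G K : Type*} [Group G] [Group K]

theorem of_mulEquiv_s13 (e : G ≃* K) (hG : IsAcceptable G) : IsAcceptable K := by
  intro H _ _ φ₁ φ₂ hconj
  obtain ⟨g, hg⟩ := hG H _ ‹_› (e.symm.toMonoidHom.comp φ₁) (e.symm.toMonoidHom.comp φ₂)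
    fun h ↦ by
      obtain ⟨k, hk⟩ := hconj h
      exact ⟨e.symm k, by simp [← hk]⟩
  exact ⟨e g, fun h ↦ e.symm.injective (by simpa using hg h)⟩

theorem of_prod_left (hGK : IsAcceptable (G × K)) : IsAcceptable G := by
  intro H _ _ φ₁ φ₂ hconj
  obtain ⟨g, hg⟩ := hGK H _ ‹_› ((MonoidHom.inl G K).comp φ₁) ((MonoidHom.inl G K).comp φ₂)
    fun h ↦ by
      obtain ⟨k, hk⟩ := hconj h
      exact ⟨(k, 1), by simp [hk]⟩
  exact ⟨g.1, fun h ↦ by simpa using congrArg Prod.fst (hg h)⟩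

-- `G : Type` because the auxiliary finite group `H × zpowers c` must live in `Type`.
theorem centralizer_singleton {G : Type} [Group G] (hG : IsAcceptable G) {c : G}
    (hc : IsOfFinOrder c) : IsAcceptable (Subgroup.centralizer {c}) := by
  intro H _ _ φ₁ φ₂ hconj
  have : Finite (Subgroup.zpowers c) := hc.finite_zpowers.to_subtype
  have hcomm (g : Subgroup.centralizer {c}) (z : Subgroup.zpowers c) : Commute (g : G) z := by
    obtain ⟨k, hk⟩ := Subgroup.mem_zpowers_iff.mp z.2
    rw [← hk]
    exact (Commute.symm (Subgroup.mem_centralizer_iff.mp g.2 c rfl)).zpow_right k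
  let ψ (φ : H →* Subgroup.centralizer {c}) : H × Subgroup.zpowers c →* G :=
    MonoidHom.noncommCoprod ((Subgroup.centralizer {c}).subtype.comp φ)
      (Subgroup.zpowers c).subtype fun h z ↦ hcomm (φ h) z
  have hψ (φ : H →* Subgroup.centralizer {c}) (h : H) (z : Subgroup.zpowers c) :
      ψ φ (h, z) = φ h * z := MonoidHom.noncommCoprod_apply ..
  obtain ⟨g, hg⟩ := hG (H × Subgroup.zpowers c) _ inferInstance (ψ φ₁) (ψ φ₂) fun ⟨h, z⟩ ↦ by
    obtain ⟨k, hk⟩ := hconj h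
    refine ⟨k, ?_⟩
    rw [hψ, hψ, ← hk]
    simp only [Subgroup.coe_mul, Subgroup.coe_inv, mul_assoc, (hcomm k z).inv_left.eq]
  have hgc : g ∈ Subgroup.centralizer {c} := by
    have hcg := hg (1, ⟨c, Subgroup.mem_zpowers c⟩)
    simp only [hψ, map_one, OneMemClass.coe_one, one_mul] at hcg
    rw [Subgroup.mem_centralizer_iff]
    rintro _ rfl
    exact (mul_inv_eq_iff_eq_mul.mp hcg).symm
  refine ⟨⟨g, hgc⟩, fun h ↦ Subtype.ext ?_⟩
  simpa [hψ] using hg (h, 1)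

end IsAcceptable

namespace Subgroup

variable {G K : Type*} [Group G] [Group K]

theorem map_centralizer_singleton_of_injective {f : G →* K} (hf : Function.Injective f) {x : G}
    (hx : ∀ k, Commute k (f x) → k ∈ f.range) :
    (centralizer {x}).map f = centralizer {f x} := by
  refine le_antisymm ?_ fun k hk ↦ ?_
  · simpa using map_centralizer_le_centralizer_image ({x} : Set G) f
  · obtain ⟨g, rfl⟩ := hx k (mem_centralizer_iff.mp hk (f x) rfl).symm
    refine ⟨g, mem_centralizer_iff.mpr ?_, rfl⟩
    intro y hy
    rw [Set.mem_singleton_iff.mp hy]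
    exact hf (by simpa using mem_centralizer_iff.mp hk (f x) rfl)

noncomputable def centralizerSingletonEquivOfInjective {f : G →* K} (hf : Function.Injective f)
    {x : G} (hx : ∀ k, Commute k (f x) → k ∈ f.range) : centralizer {f x} ≃* centralizer {x} :=
  (MulEquiv.subgroupCongr (map_centralizer_singleton_of_injective hf hx).symm).trans
    (equivMapOfInjective _ f hf).symm

theorem centralizer_singleton_one_prod (y : K) :
    centralizer {((1 : G), y)} = (⊤ : Subgroup G).prod (centralizer {y}) := by
  ext ⟨g, k⟩
  simp [mem_centralizer_iff, mem_prod, Prod.ext_iff]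

noncomputable def centralizerSingletonOneProdEquiv (y : K) :
    centralizer {((1 : G), y)} ≃* G × centralizer {y} :=
  (MulEquiv.subgroupCongr (centralizer_singleton_one_prod y)).trans
    (((⊤ : Subgroup G).prodEquiv _).trans (topEquiv.prodCongr (MulEquiv.refl _)))

end Subgroup

namespace Matrix

variable {n p R : Type*} [Fintype n] [Fintype p] [DecidableEq n] [DecidableEq p]

def fromBlocksDiagonalHom [Semiring R] :
    Matrix n n R × Matrix p p R →* Matrix (n ⊕ p) (n ⊕ p) R where
  toFun X := fromBlocks X.1 0 0 X.2
  map_one' := fromBlocks_one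
  map_mul' X Y := by simp [fromBlocks_multiply]

theorem eq_fromBlocks_toBlocks_of_commute [CommRing R] {M : Matrix (n ⊕ p) (n ⊕ p) R} {a : R}
    {D : Matrix p p R} (hD : IsUnit (D - a • 1)) (hM : Commute M (fromBlocks (a • 1) 0 0 D)) :
    M = fromBlocks M.toBlocks₁₁ 0 0 M.toBlocks₂₂ := by
  have hblocks := hM.eq
  rw [← fromBlocks_toBlocks M, fromBlocks_multiply, fromBlocks_multiply, fromBlocks_inj] at hblocks
  obtain ⟨-, h₁₂, h₂₁, -⟩ := hblocks
  simp only [Matrix.mul_zero, Matrix.zero_mul, add_zero, zero_add, Matrix.mul_smul,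
    Matrix.smul_mul, Matrix.mul_one, Matrix.one_mul] at h₁₂ h₂₁
  set D' := ((hD.unit⁻¹ : (Matrix p p R)ˣ) : Matrix p p R)
  have hB : M.toBlocks₁₂ = 0 := calc
    M.toBlocks₁₂ = M.toBlocks₁₂ * (D - a • 1) * D' := by
      rw [Matrix.mul_assoc, hD.mul_val_inv, Matrix.mul_one]
    _ = 0 := by
      rw [Matrix.mul_sub, h₁₂, Matrix.mul_smul, Matrix.mul_one, sub_self, Matrix.zero_mul]
  have hC : M.toBlocks₂₁ = 0 := calc
    M.toBlocks₂₁ = D' * ((D - a • 1) * M.toBlocks₂₁) := by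
      rw [← Matrix.mul_assoc, hD.val_inv_mul, Matrix.one_mul]
    _ = 0 := by
      rw [Matrix.sub_mul, ← h₂₁, Matrix.smul_mul, Matrix.one_mul, sub_self, Matrix.mul_zero]
  conv_lhs => rw [← fromBlocks_toBlocks M, hB, hC]

namespace GeneralLinearGroup

variable [CommRing R]

def blockDiag : GL n R × GL p R →* GL (n ⊕ p) R :=
  (Units.map fromBlocksDiagonalHom).comp MulEquiv.prodUnits.symm.toMonoidHom

theorem coe_blockDiag (X : GL n R) (Y : GL p R) :
    (blockDiag (X, Y) : Matrix (n ⊕ p) (n ⊕ p) R) = fromBlocks X 0 0 Y := rfl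

theorem blockDiag_injective : Function.Injective (blockDiag : GL n R × GL p R →* _) := by
  rintro ⟨X, Y⟩ ⟨X', Y'⟩ h
  have := congrArg Units.val h
  rw [coe_blockDiag, coe_blockDiag, fromBlocks_inj] at this
  exact Prod.ext (Units.ext this.1) (Units.ext this.2.2.2)

theorem mem_range_blockDiag_of_commute {D : GL p R}
    (hD : IsUnit ((D : Matrix p p R) - 1)) {g : GL (n ⊕ p) R}
    (hg : Commute g (blockDiag (1, D))) : g ∈ blockDiag.range := by
  have hdiag (h : GL (n ⊕ p) R) (hh : Commute h (blockDiag (1, D))) :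
      (h : Matrix (n ⊕ p) (n ⊕ p) R) = fromBlocks (h : Matrix (n ⊕ p) (n ⊕ p) R).toBlocks₁₁ 0 0
        (h : Matrix (n ⊕ p) (n ⊕ p) R).toBlocks₂₂ := by
    refine eq_fromBlocks_toBlocks_of_commute (a := 1) (by rwa [one_smul]) ?_
    rw [one_smul]
    simpa [coe_blockDiag] using hh.units_val
  have hg' := hdiag g hg
  have hginv := hdiag g⁻¹ hg.inv_left
  have hmul := g.mul_inv
  have hmul' := g.inv_mul
  rw [hg', hginv, fromBlocks_multiply, ← fromBlocks_one, fromBlocks_inj] at hmul hmul'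
  simp only [Matrix.mul_zero, Matrix.zero_mul, add_zero, zero_add] at hmul hmul'
  refine ⟨(⟨_, _, hmul.1, hmul'.1⟩, ⟨_, _, hmul.2.2.2, hmul'.2.2.2⟩), Units.ext ?_⟩
  rw [coe_blockDiag]
  exact hg'.symm

def reindex (e : n ≃ p) : GL n R ≃* GL p R :=
  Units.mapEquiv (reindexAlgEquiv R R e).toMulEquiv

theorem coe_reindex (e : n ≃ p) (A : GL n R) :
    (reindex e A : Matrix p p R) = Matrix.reindex e e A := rfl

end GeneralLinearGroup

end Matrix

section FormGroup

open Matrix.GeneralLinearGroup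

variable {n p F : Type*} [Fintype n] [Fintype p] [DecidableEq n] [DecidableEq p] [Field F]

theorem mem_formGroup_iff {J : Matrix n n F} {A : GL n F} :
    A ∈ formGroup J ↔ (A : Matrix n n F)ᵀ * J * A = J := Iff.rfl

theorem blockDiag_mem_formGroup_iff {J₁ : Matrix n n F} {J₂ : Matrix p p F} {X : GL n F}
    {Y : GL p F} :
    blockDiag (X, Y) ∈ formGroup (fromBlocks J₁ 0 0 J₂) ↔ X ∈ formGroup J₁ ∧ Y ∈ formGroup J₂ := by
  simp [mem_formGroup_iff, coe_blockDiag, fromBlocks_transpose, fromBlocks_multiply]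

theorem reindex_mem_formGroup_iff (e : n ≃ p) {J : Matrix n n F} {A : GL n F} :
    reindex e A ∈ formGroup (Matrix.reindex e e J) ↔ A ∈ formGroup J := by
  rw [mem_formGroup_iff, mem_formGroup_iff, coe_reindex, transpose_reindex,
    ← coe_reindexAlgEquiv F F, ← map_mul, ← map_mul, (reindexAlgEquiv F F e).injective.eq_iff]

end FormGroup

namespace SpGroup

variable {F : Type*} [Field F] {m : ℕ}

def sumEquiv (m : ℕ) : (Fin m ⊕ Fin m) ⊕ (Fin 1 ⊕ Fin 1) ≃ Fin (m + 1) ⊕ Fin (m + 1) :=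
  (Equiv.sumSumSumComm _ _ _ _).trans (Equiv.sumCongr finSumFinEquiv finSumFinEquiv)

theorem reindex_sumEquiv_symm_J :
    Matrix.reindex (sumEquiv m).symm (sumEquiv m).symm (fromBlocks 0 1 (-1) 0) =
      (fromBlocks (fromBlocks 0 1 (-1) 0) 0 0 (fromBlocks 0 1 (-1) 0) :
        Matrix ((Fin m ⊕ Fin m) ⊕ (Fin 1 ⊕ Fin 1)) ((Fin m ⊕ Fin m) ⊕ (Fin 1 ⊕ Fin 1)) F) := by
  ext ((x | x) | (x | x)) ((y | y) | (y | y)) <;>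
    simp [sumEquiv, Matrix.one_apply, fromBlocks, Fin.ext_iff] <;> omega

theorem mem_iff_reindex_mem {A : GL (Fin (m + 1) ⊕ Fin (m + 1)) F} :
    A ∈ SpGroup (m + 1) F ↔
      GeneralLinearGroup.reindex (sumEquiv m).symm A ∈
        formGroup (fromBlocks (fromBlocks 0 1 (-1) 0) 0 0 (fromBlocks 0 1 (-1) 0)) := by
  rw [← reindex_sumEquiv_symm_J, reindex_mem_formGroup_iff]
  rfl

noncomputable def blockDiag : SpGroup m F × SpGroup 1 F →* SpGroup (m + 1) F :=
  MonoidHom.codRestrict ((GeneralLinearGroup.reindex (sumEquiv m).symm).symm.toMonoidHom.comp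
      (GeneralLinearGroup.blockDiag.comp ((SpGroup m F).subtype.prodMap (SpGroup 1 F).subtype)))
    _ fun X ↦ by
      rw [mem_iff_reindex_mem, MonoidHom.comp_apply, MulEquiv.coe_toMonoidHom,
        MulEquiv.apply_symm_apply]
      exact blockDiag_mem_formGroup_iff.mpr ⟨X.1.2, X.2.2⟩

theorem reindex_blockDiag (X : SpGroup m F × SpGroup 1 F) :
    GeneralLinearGroup.reindex (sumEquiv m).symm (blockDiag X : GL (Fin (m + 1) ⊕ Fin (m + 1)) F) =
      GeneralLinearGroup.blockDiag ((X.1 : GL (Fin m ⊕ Fin m) F), (X.2 : GL (Fin 1 ⊕ Fin 1) F)) :=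
  MulEquiv.apply_symm_apply _ _

theorem blockDiag_injective : Function.Injective (blockDiag : SpGroup m F × SpGroup 1 F →* _) := by
  intro X Y h
  have h' := congrArg (GeneralLinearGroup.reindex (sumEquiv m).symm ∘ Subtype.val) h
  simp only [Function.comp_apply, reindex_blockDiag] at h'
  obtain ⟨h₁, h₂⟩ := Prod.ext_iff.mp (GeneralLinearGroup.blockDiag_injective h')
  exact Prod.ext (Subtype.ext h₁) (Subtype.ext h₂)

theorem mem_range_blockDiag_of_commute {d : SpGroup 1 F}
    (hd : IsUnit (((d : GL (Fin 1 ⊕ Fin 1) F) : Matrix (Fin 1 ⊕ Fin 1) (Fin 1 ⊕ Fin 1) F) - 1))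
    {g : SpGroup (m + 1) F} (hg : Commute g (blockDiag (1, d))) : g ∈ blockDiag.range := by
  obtain ⟨⟨X, Y⟩, hXY⟩ := GeneralLinearGroup.mem_range_blockDiag_of_commute hd
    (g := GeneralLinearGroup.reindex (sumEquiv m).symm (g : GL (Fin (m + 1) ⊕ Fin (m + 1)) F)) (by
      simpa [reindex_blockDiag] using
        (hg.map (SpGroup (m + 1) F).subtype).map (GeneralLinearGroup.reindex (sumEquiv m).symm))
  have hmem := (mem_iff_reindex_mem.mp g.2)
  rw [← hXY, blockDiag_mem_formGroup_iff] at hmem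
  refine ⟨(⟨X, hmem.1⟩, ⟨Y, hmem.2⟩),
    Subtype.ext ((GeneralLinearGroup.reindex (sumEquiv m).symm).injective ?_)⟩
  rw [reindex_blockDiag, ← hXY]

noncomputable def centralizerBlockDiagEquiv {d : SpGroup 1 F}
    (hd : IsUnit (((d : GL (Fin 1 ⊕ Fin 1) F) : Matrix (Fin 1 ⊕ Fin 1) (Fin 1 ⊕ Fin 1) F) - 1)) :
    Subgroup.centralizer {blockDiag ((1 : SpGroup m F), d)} ≃*
      SpGroup m F × Subgroup.centralizer {d} :=
  (Subgroup.centralizerSingletonEquivOfInjective blockDiag_injective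
    fun _ ↦ mem_range_blockDiag_of_commute hd).trans
    (Subgroup.centralizerSingletonOneProdEquiv d)

noncomputable def torus : Fˣ →* SpGroup 1 F :=
  MonoidHom.codRestrict (GeneralLinearGroup.blockDiag.comp
      (((Units.map (scalar (Fin 1) : F →+* Matrix (Fin 1) (Fin 1) F).toMonoidHom).prodMap
        (Units.map (scalar (Fin 1) : F →+* Matrix (Fin 1) (Fin 1) F).toMonoidHom)).comp
        ((MonoidHom.id Fˣ).prod invMonoidHom)))
    _ fun α ↦ by
      rw [SpGroup, mem_formGroup_iff]
      ext (i | i) (j | j) <;> simp [GeneralLinearGroup.coe_blockDiag] <;> field_simp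

theorem coe_torus (α : Fˣ) :
    ((torus α : GL (Fin 1 ⊕ Fin 1) F) : Matrix (Fin 1 ⊕ Fin 1) (Fin 1 ⊕ Fin 1) F) =
      fromBlocks ((α : F) • 1) 0 0 ((α : F)⁻¹ • 1) := by
  simp [torus, GeneralLinearGroup.coe_blockDiag, smul_one_eq_diagonal]

theorem torus_injective : Function.Injective (torus : Fˣ →* SpGroup 1 F) := by
  intro α β h
  have hentry := congrArg (fun g : SpGroup 1 F ↦
    ((g : GL (Fin 1 ⊕ Fin 1) F) : Matrix (Fin 1 ⊕ Fin 1) (Fin 1 ⊕ Fin 1) F) (.inl 0) (.inl 0)) h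
  simpa [coe_torus, Units.ext_iff] using hentry

theorem isUnit_coe_torus_sub_one {α : Fˣ} (hα : α ≠ 1) :
    IsUnit (((torus α : GL (Fin 1 ⊕ Fin 1) F) : Matrix (Fin 1 ⊕ Fin 1) (Fin 1 ⊕ Fin 1) F) - 1) := by
  rw [coe_torus, smul_one_eq_diagonal, smul_one_eq_diagonal, fromBlocks_diagonal, ← diagonal_one,
    diagonal_sub, isUnit_diagonal, Pi.isUnit_iff]
  have : (α : F) ≠ 1 := fun h ↦ hα (Units.ext h)
  rintro (i | i) <;> simp [sub_ne_zero, this]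

theorem centralizer_torus {l : Fˣ} (hl : l ^ 2 ≠ 1) :
    Subgroup.centralizer {torus l} = (torus : Fˣ →* SpGroup 1 F).range := by
  refine le_antisymm (fun g hg ↦ ?_) ?_
  · set M := ((g : GL (Fin 1 ⊕ Fin 1) F) : Matrix (Fin 1 ⊕ Fin 1) (Fin 1 ⊕ Fin 1) F)
    have hcomm : Commute M (fromBlocks ((l : F) • 1) 0 0 ((l : F)⁻¹ • 1)) := by
      rw [← coe_torus]
      exact Commute.map (Subgroup.mem_centralizer_iff.mp hg _ rfl).symm
        ((Units.coeHom _).comp (SpGroup 1 F).subtype)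
    have hl' : (l : F)⁻¹ - l ≠ 0 := by
      refine sub_ne_zero.mpr fun h ↦ hl (Units.ext ?_)
      rw [Units.val_pow_eq_pow_val, sq, Units.val_one]
      nth_rewrite 2 [← h]
      exact mul_inv_cancel₀ l.ne_zero
    have hM := eq_fromBlocks_toBlocks_of_commute (by
      rw [← sub_smul]
      exact isUnit_one.smul (Units.mk0 _ hl')) hcomm
    have hsp : Mᵀ * fromBlocks 0 1 (-1) 0 * M = fromBlocks 0 1 (-1) 0 := g.2
    rw [hM] at hsp
    simp only [fromBlocks_transpose, fromBlocks_multiply, fromBlocks_inj, transpose_zero,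
      Matrix.mul_zero, Matrix.zero_mul, Matrix.mul_one, add_zero, zero_add] at hsp
    have hdet : M.toBlocks₁₁ 0 0 * M.toBlocks₂₂ 0 0 = 1 := by
      simpa [mul_apply] using congrFun (congrFun hsp.2.1 0) 0
    refine ⟨Units.mkOfMulEqOne _ _ hdet, Subtype.ext (Units.ext ?_)⟩
    rw [coe_torus, Units.val_mkOfMulEqOne, inv_eq_of_mul_eq_one_right hdet]
    change _ = M
    conv_rhs => rw [hM]
    congr 1 <;> ext i j <;> simp [Subsingleton.elim i 0, Subsingleton.elim j 0]
  · rintro _ ⟨α, rfl⟩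
    rw [Subgroup.mem_centralizer_iff]
    rintro _ rfl
    rw [← map_mul, mul_comm, map_mul]

noncomputable def centralizerTorusEquiv {l : Fˣ} (hl : l ^ 2 ≠ 1) :
    Subgroup.centralizer {torus l} ≃* Fˣ :=
  (MulEquiv.subgroupCongr (centralizer_torus hl)).trans (MonoidHom.ofInjective torus_injective).symm

end SpGroup

theorem Sp_acceptable_descends (F : Type) [Field F] (hchar : (2 : F) ≠ 0)
    (hu : ∃ u : Fˣ, u ^ 2 ≠ 1) (m : ℕ) :
    (∃ a : SpGroup (m + 1) F,
      Nonempty ((Subgroup.centralizer ({a} : Set (SpGroup (m + 1) F))) ≃* Fˣ × SpGroup m F)) ∧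
    (IsAcceptable (SpGroup (m + 1) F) → IsAcceptable (SpGroup m F)) := by
  obtain ⟨l, hl⟩ := hu
  have hl₁ : l ≠ 1 := by
    rintro rfl
    exact hl (one_pow 2)
  have hneg : (-1 : Fˣ) ≠ 1 := fun h ↦ hchar <| by
    have h' := congrArg Units.val h
    rw [Units.val_neg, Units.val_one] at h'
    linear_combination -h'
  have hc : IsOfFinOrder (SpGroup.blockDiag ((1 : SpGroup m F), SpGroup.torus (-1 : Fˣ))) :=
    isOfFinOrder_iff_pow_eq_one.mpr ⟨2, two_pos, by simp [← map_pow, Prod.mk_one_one]⟩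
  refine ⟨⟨SpGroup.blockDiag (1, SpGroup.torus l), ⟨?_⟩⟩, fun hAcc ↦ ?_⟩
  · exact (SpGroup.centralizerBlockDiagEquiv (SpGroup.isUnit_coe_torus_sub_one hl₁)).trans
      (((MulEquiv.refl _).prodCongr (SpGroup.centralizerTorusEquiv hl)).trans (MulEquiv.prodComm))
  · exact ((hAcc.centralizer_singleton hc).of_mulEquiv_s13
      (SpGroup.centralizerBlockDiagEquiv (SpGroup.isUnit_coe_torus_sub_one hneg))).of_prod_left
end
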